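/- arXiv:1209.3832 — 3 statements merged into one kernel-verified Lean document; each statement's English description precedes it below -/
import Mathlib

section
/- Let g be a finite-dimensional simple Lie algebra over ℂ with a ℤ/nℤ-grading g = ⊕_{i ∈ ℤ/nℤ} g_i, let j ∈ ℤ/nℤ, and let h ∈ g_j be an ad-semisimple element such that [x, h] = 0 for all x ∈ g_0. Then h lies in the center of the Lie subalgebra g^{(j)} := ⊕_{m ∈ ℤ} g_{m·j}; that is, [x, h] = 0 for every m ∈ ℤ and every x ∈ g_{m·j}. -/
/-- If `f` is a semisimple endomorphism and `f ^ K x = 0`, then `f x = 0`. -/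
private lemma ss_ker_pow {K₀ : Type} [Field K₀] {M : Type} [AddCommGroup M] [Module K₀ M]
    {f : Module.End K₀ M} (hf : f.IsSemisimple) {x : M} {K : ℕ} (hx : (f ^ K) x = 0) :
    f x = 0 := by
  set p : Submodule K₀ M := Submodule.span K₀ (Set.range fun i : ℕ => (f ^ i) x) with hp_def
  have hxp : x ∈ p := Submodule.subset_span ⟨0, by simp⟩
  have hp : ∀ y ∈ p, f y ∈ p := by
    rw [hp_def]
    intro y hy
    refine Submodule.span_induction ?_ (by simp) (fun u v _ _ hu hv => by
      rw [map_add]; exact Submodule.add_mem _ hu hv)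
      (fun c u _ hu => by rw [map_smul]; exact Submodule.smul_mem _ c hu) hy
    rintro - ⟨i, rfl⟩
    refine Submodule.subset_span ⟨i + 1, ?_⟩
    show (f ^ (i + 1)) x = f ((f ^ i) x)
    rw [pow_succ', Module.End.mul_apply]
  have hp' : p ∈ f.invtSubmodule := hp
  have hker : p ≤ LinearMap.ker (f ^ K) := by
    rw [hp_def, Submodule.span_le]
    rintro - ⟨i, rfl⟩
    simp only [SetLike.mem_coe, LinearMap.mem_ker]
    rw [← Module.End.mul_apply, ← pow_add, add_comm K i, pow_add, Module.End.mul_apply, hx,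
      map_zero]
  have hn : IsNilpotent (f.restrict hp) := by
    refine ⟨K, ?_⟩
    rw [Module.End.pow_restrict K hp]
    ext ⟨y, hy⟩
    simpa [LinearMap.restrict_apply, Subtype.ext_iff] using hker hy
  have hz : f.restrict hp = 0 :=
    Module.End.eq_zero_of_isNilpotent_isSemisimple hn (hf.restrict hp')
  have := LinearMap.congr_fun hz ⟨x, hxp⟩
  simpa [LinearMap.restrict_apply, Subtype.ext_iff] using this

/-- Let `L` be a finite-dimensional simple complex Lie algebra with a
`ℤ/nℤ`-grading `V`, let `j : ZMod n`, and let `h ∈ V j` be ad-semisimple with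
`⁅x, h⁆ = 0` for all `x ∈ V 0`.  Then `h` is central in `g^{(j)} = ⊕_{m ∈ ℤ} V (m • j)`:
for every `m : ℤ` and every `x ∈ V (m • j)` we have `⁅x, h⁆ = 0`. -/
theorem semisimple_central_in_gj {n : ℕ}
    {L : Type} [LieRing L] [LieAlgebra ℂ L]
    [FiniteDimensional ℂ L] [LieAlgebra.IsSimple ℂ L]
    (V : ZMod n → Submodule ℂ L)
    (hVinternal : DirectSum.IsInternal V)
    (hVbracket : ∀ i j : ZMod n, ∀ x ∈ V i, ∀ y ∈ V j, ⁅x, y⁆ ∈ V (i + j))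
    (j : ZMod n) (h : L) (hh : h ∈ V j)
    (hss : Module.End.IsSemisimple (LieAlgebra.ad ℂ L h))
    (hcent0 : ∀ x ∈ V 0, ⁅x, h⁆ = 0) :
    ∀ m : ℤ, ∀ x ∈ V (m • j), ⁅x, h⁆ = 0 := by
  intro m x hx
  set a : Module.End ℂ L := LieAlgebra.ad ℂ L h with ha
  -- iterates of ad h stay in the grading pieces
  have hiter : ∀ k : ℕ, (a ^ k) x ∈ V ((m + k) • j) := by
    intro k
    induction k with
    | zero => simpa using hx
    | succ k ih =>
      have : (a ^ (k + 1)) x = ⁅h, (a ^ k) x⁆ := by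
        rw [pow_succ', Module.End.mul_apply]; rfl
      rw [this]
      have hb := hVbracket j ((m + k) • j) h hh _ ih
      have harith : j + (m + (k : ℤ)) • j = (m + ((k : ℕ) + 1 : ℕ)) • j := by
        push_cast
        rw [add_smul, add_smul, add_smul, one_smul]
        abel
      rwa [harith] at hb
  -- ⁅h, x⁆ = 0 suffices
  suffices hgoal : a x = 0 by
    have : ⁅x, h⁆ = -⁅h, x⁆ := (neg_eq_iff_eq_neg.mpr (lie_skew h x).symm).symm
    rw [this]
    have : a x = ⁅h, x⁆ := rfl
    rw [← this, hgoal, neg_zero]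
  -- it suffices to find K with a ^ K x = 0
  suffices hK : ∃ K : ℕ, (a ^ K) x = 0 by
    obtain ⟨K, hK⟩ := hK
    exact ss_ker_pow hss hK
  rcases eq_or_ne n 0 with rfl | hn
  · -- n = 0 : ZMod 0 = ℤ, use finite-dimensionality
    rcases eq_or_ne j 0 with rfl | hj
    · -- j = 0 : x ∈ V 0 already
      refine ⟨1, ?_⟩
      have hx0 : x ∈ V 0 := by simpa using hx
      have h1 : a x = ⁅h, x⁆ := rfl
      rw [pow_one, h1, ← lie_skew, hcent0 x hx0, neg_zero]
    · -- j ≠ 0 : the indices (m + k) • j are pairwise distinct integers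
      have hfin : Set.Finite {i : ZMod 0 | V i ≠ ⊥} :=
        WellFoundedLT.finite_ne_bot_of_iSupIndep hVinternal.submodule_iSupIndep
      -- view j as an integer
      let jZ : ℤ := j
      have hjZ : jZ ≠ 0 := hj
      have hinj : Function.Injective (fun k : ℕ => ((m + k) • j : ZMod 0)) := by
        intro k₁ k₂ hk
        have hk' : ((m + k₁ : ℤ)) • jZ = ((m + k₂ : ℤ)) • jZ := hk
        have := smul_left_injective ℤ (M := ℤ) hjZ hk'
        omega
      have hpre : Set.Finite {k : ℕ | V ((m + k) • j) ≠ ⊥} := by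
        have : {k : ℕ | V ((m + k) • j) ≠ ⊥} =
            (fun k : ℕ => ((m + k) • j : ZMod 0)) ⁻¹' {i : ZMod 0 | V i ≠ ⊥} := rfl
        rw [this]
        exact Set.Finite.preimage hinj.injOn hfin
      obtain ⟨k, hk⟩ : ∃ k : ℕ, k ∉ {k : ℕ | V ((m + k) • j) ≠ ⊥} :=
        Set.Infinite.nonempty hpre.infinite_compl
      simp only [Set.mem_setOf_eq, not_not] at hk
      refine ⟨k, ?_⟩
      have := hiter k
      rw [hk] at this
      simpa using this
  · -- n ≠ 0 : j has finite order; push into V 0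
    set M : ℕ := m.natAbs + 1 with hM
    have hkpos : (m : ℤ) ≤ (n : ℤ) * M := by
      have h1 : (m : ℤ) ≤ m.natAbs := Int.le_natAbs
      have hn1 : (1 : ℤ) ≤ n := by exact_mod_cast Nat.one_le_iff_ne_zero.mpr hn
      have hM' : ((M : ℤ)) = m.natAbs + 1 := by rw [hM]; push_cast; ring
      have h2 : (M : ℤ) ≤ n * M := le_mul_of_one_le_left (by positivity) hn1
      linarith
    set k : ℕ := ((n : ℤ) * M - m).toNat with hk
    have hkk : (m + (k : ℤ)) = (n : ℤ) * M := by
      rw [hk, Int.toNat_of_nonneg (by omega)]; ring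
    have hzero : ((m + (k : ℤ)) • j : ZMod n) = 0 := by
      rw [hkk]
      have : ((n : ℤ) * M) • j = ((((n : ℤ) * M : ℤ) : ZMod n)) * j := by
        rw [zsmul_eq_mul]
      rw [this]
      have : ((((n : ℤ) * M : ℤ) : ZMod n)) = 0 := by
        push_cast
        simp [ZMod.natCast_self]
      rw [this, zero_mul]
    refine ⟨k + 1, ?_⟩
    have hmem : (a ^ k) x ∈ V 0 := by rw [← hzero]; exact hiter k
    have : (a ^ (k + 1)) x = ⁅h, (a ^ k) x⁆ := by
      rw [pow_succ', Module.End.mul_apply]; rfl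
    rw [this, ← lie_skew, hcent0 _ hmem, neg_zero]
end

section
/- Let g be a finite-dimensional simple Lie algebra over ℂ with a ℤ/nℤ-grading g = ⊕_{i ∈ ℤ/nℤ} g_i, let j ∈ ℤ/nℤ be a unit of the ring ℤ/nℤ, and let h ∈ g_j be an ad-semisimple element such that [x, h] = 0 for all x ∈ g_0. Then h = 0. -/
/-!
Because `ad h` is semisimple, `ker (ad h)² = ker (ad h)`; since `ad h` maps `V i` into
`V (j + i)`, the piece `V i` is killed by `ad h` as soon as `V (j + i)` is. Iterating, it
suffices to reach from every degree `i` a degree killed by `ad h` along `i, j + i, 2j + i, …`.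
For `n ≠ 0` the unit `j` generates `ℤ/nℤ`, so the orbit reaches `0`, which is killed by
hypothesis; for `n = 0` the orbit is infinite while only finitely many `V i` are nonzero.
Hence `ad h = 0`, and `h` lies in the centre of the simple algebra, which is trivial.
-/

namespace Module.End

variable {R M : Type*} [CommRing R] [AddCommGroup M] [Module R M] {f : End R M}

lemma IsFinitelySemisimple.apply_eq_zero_of_apply_apply_eq_zero (hf : f.IsFinitelySemisimple)
    {m : M} (hm : f (f m) = 0) : f m = 0 := by
  have hm₂ : m ∈ f.genEigenspace 0 (2 : ℕ) := by
    rw [mem_genEigenspace_nat]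
    simpa [pow_two] using hm
  rw [hf.genEigenspace_eq_eigenspace 0 (by norm_num)] at hm₂
  simpa using hm₂

lemma IsFinitelySemisimple.le_ker_of_iterate_le_ker (hf : f.IsFinitelySemisimple) {ι : Type*}
    {V : ι → Submodule R M} {σ : ι → ι} (hV : ∀ i, V i ≤ (V (σ i)).comap f) (k : ℕ) (i : ι)
    (hk : V (σ^[k] i) ≤ LinearMap.ker f) : V i ≤ LinearMap.ker f := by
  induction k generalizing i with
  | zero => exact hk
  | succ k ih =>
    have hσi : V (σ i) ≤ LinearMap.ker f := ih (σ i) (by rwa [← Function.iterate_succ_apply])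
    exact fun x hx ↦ hf.apply_eq_zero_of_apply_apply_eq_zero (hσi (hV i hx))

end Module.End

lemma iSupIndep.exists_nsmul_add_eq_bot {α ι : Type*} [CompleteLattice α] [WellFoundedGT α]
    [AddGroup ι] [IsAddTorsionFree ι] {V : ι → α} (hV : iSupIndep V) {j : ι} (hj : j ≠ 0)
    (i : ι) : ∃ k : ℕ, V (k • j + i) = ⊥ := by
  have hinj : Function.Injective fun k : ℕ ↦ k • j + i :=
    (add_left_injective i).comp
      (injective_nsmul_iff_not_isOfFinAddOrder.mpr (not_isOfFinAddOrder_of_isAddTorsionFree hj))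
  obtain ⟨k, hk⟩ :=
    ((WellFoundedGT.finite_ne_bot_of_iSupIndep hV).preimage hinj.injOn).infinite_compl.nonempty
  exact ⟨k, not_not.mp hk⟩

lemma ZMod.exists_nsmul_add_eq_zero {n : ℕ} [NeZero n] {j : ZMod n} (hj : IsUnit j)
    (i : ZMod n) : ∃ k : ℕ, k • j + i = 0 := by
  refine ⟨(-i * hj.unit⁻¹ : ZMod n).val, ?_⟩
  rw [nsmul_eq_mul, ZMod.natCast_zmod_val, mul_assoc, hj.val_inv_mul, mul_one, neg_add_cancel]

/-- Let `L` be a finite-dimensional simple complex Lie algebra with a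
`ℤ/nℤ`-grading `V`, let `j : ZMod n` be a unit of the ring `ZMod n`, and let `h ∈ V j`
be ad-semisimple with `⁅x, h⁆ = 0` for all `x ∈ V 0`.  Then `h = 0`. -/
theorem semisimple_zero_if_unit_grade {n : ℕ}
    {L : Type} [LieRing L] [LieAlgebra ℂ L]
    [FiniteDimensional ℂ L] [LieAlgebra.IsSimple ℂ L]
    (V : ZMod n → Submodule ℂ L)
    (hVinternal : DirectSum.IsInternal V)
    (hVbracket : ∀ i j : ZMod n, ∀ x ∈ V i, ∀ y ∈ V j, ⁅x, y⁆ ∈ V (i + j))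
    (j : ZMod n) (hj : IsUnit j) (h : L) (hh : h ∈ V j)
    (hss : Module.End.IsSemisimple (LieAlgebra.ad ℂ L h))
    (hcent0 : ∀ x ∈ V 0, ⁅x, h⁆ = 0) :
    h = 0 := by
  have hshift : ∀ i, V i ≤ (V (j + i)).comap (LieAlgebra.ad ℂ L h) :=
    fun i x hx ↦ hVbracket j i h hh x hx
  have hker (i : ZMod n) : V i ≤ LinearMap.ker (LieAlgebra.ad ℂ L h) := by
    rcases eq_or_ne n 0 with rfl | hn
    · obtain ⟨k, hk⟩ := hVinternal.submodule_iSupIndep.exists_nsmul_add_eq_bot hj.ne_zero i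
      refine hss.isFinitelySemisimple.le_ker_of_iterate_le_ker hshift k i ?_
      rw [add_left_iterate_apply, hk]
      exact bot_le
    · have : NeZero n := ⟨hn⟩
      obtain ⟨k, hk⟩ := ZMod.exists_nsmul_add_eq_zero hj i
      refine hss.isFinitelySemisimple.le_ker_of_iterate_le_ker hshift k i ?_
      rw [add_left_iterate_apply, hk]
      intro x hx
      rw [LinearMap.mem_ker, LieAlgebra.ad_apply, ← lie_skew, hcent0 x hx, neg_zero]
  have had : LieAlgebra.ad ℂ L h = 0 := by
    rw [← LinearMap.ker_eq_top, eq_top_iff, ← hVinternal.submodule_iSup_eq_top]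
    exact iSup_le hker
  rw [← LieSubmodule.mem_bot (R := ℂ) (L := L), ← LieAlgebra.ad_ker_eq_bot_of_hasTrivialRadical]
  exact had
end

section
/- Let g be a finite-dimensional Lie algebra over ℂ with nondegenerate Killing form and a ℤ/nℤ-grading g = ⊕_{i ∈ ℤ/nℤ} g_i, let j ∈ ℤ/nℤ, and let h ∈ g_j be such that ad h : g → g is a semisimple endomorphism. If a ∈ ℤ/nℤ satisfies [x, h] = 0 for all x ∈ g_{-a}, then [y, h] = 0 for all y ∈ g_a. -/
/-!
For `y ∈ V a` the element `⁅y, h⁆` lies in `V (a + j)`, and graded pieces pair to zero under the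
Killing form unless their degrees add up to zero; so by nondegeneracy it suffices to show that
`⁅y, h⁆` is Killing-orthogonal to `V (-(a + j))`. For `u` there, `⁅h, u⁆ ∈ V (-a)` commutes with `h`,
i.e. `(ad h)² u = 0`, and semisimplicity of `ad h` upgrades this to `⁅h, u⁆ = 0`. Invariance of the
Killing form then gives `κ(⁅y, h⁆, u) = κ(y, ⁅h, u⁆) = 0`.
-/

open LieAlgebra

lemma Module.End.IsSemisimple.apply_eq_zero_of_apply_apply_eq_zero
    {R M : Type*} [CommRing R] [AddCommGroup M] [Module R M] {f : Module.End R M}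
    (hf : f.IsSemisimple) {m : M} (hm : f (f m) = 0) : f m = 0 := by
  have hm₂ : m ∈ f.genEigenspace 0 (2 : ℕ) := by
    rw [Module.End.mem_genEigenspace_nat]
    simpa [sq] using hm
  rw [hf.isFinitelySemisimple.genEigenspace_eq_eigenspace 0 (by norm_num)] at hm₂
  simpa using hm₂

section Grading

variable {ι K L : Type*} [AddCommGroup ι] [DecidableEq ι] [Field K]
  [LieRing L] [LieAlgebra K L] [FiniteDimensional K L] {V : ι → Submodule K L}

lemma killingForm_apply_eq_zero_of_mem_grading_of_add_ne_zero (hV : DirectSum.IsInternal V)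
    (hVbracket : ∀ i j, ∀ x ∈ V i, ∀ y ∈ V j, ⁅x, y⁆ ∈ V (i + j))
    {p q : ι} {x y : L} (hx : x ∈ V p) (hy : y ∈ V q) (hpq : p + q ≠ 0) :
    killingForm K L x y = 0 := by
  rw [killingForm_apply_apply]
  refine LinearMap.trace_eq_zero_of_mapsTo_ne hV (p + q + ·)
    (fun m ↦ by simpa only [add_ne_right] using hpq) (fun m v hv ↦ ?_)
  have hxyv := hVbracket p (q + m) x hx _ (hVbracket q m y hy v hv)
  rwa [← add_assoc] at hxyv

lemma mem_ker_killingForm_of_mem_grading_of_forall_mem_neg (hV : DirectSum.IsInternal V)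
    (hVbracket : ∀ i j, ∀ x ∈ V i, ∀ y ∈ V j, ⁅x, y⁆ ∈ V (i + j))
    {p : ι} {x : L} (hx : x ∈ V p) (hx' : ∀ y ∈ V (-p), killingForm K L x y = 0) :
    x ∈ LinearMap.ker (killingForm K L) := by
  rw [LinearMap.mem_ker]
  ext y
  have hy : y ∈ ⨆ q, V q := by simp [hV.submodule_iSup_eq_top]
  induction hy using Submodule.iSup_induction' with
  | mem q y hy =>
    by_cases hpq : p + q = 0
    · exact hx' y (add_eq_zero_iff_neg_eq.mp hpq ▸ hy)
    · exact killingForm_apply_eq_zero_of_mem_grading_of_add_ne_zero hV hVbracket hx hy hpq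
  | zero => simp
  | add => simp_all

end Grading

/-- Let `L` be a finite-dimensional complex Lie algebra with
nondegenerate Killing form and a `ℤ/nℤ`-grading `V`, let `j : ZMod n`, and let
`h ∈ V j` be such that `ad h : L → L` is a semisimple endomorphism.  If `a : ZMod n`
satisfies `⁅x, h⁆ = 0` for all `x ∈ V (-a)`, then `⁅y, h⁆ = 0` for all `y ∈ V a`. -/
theorem centralizer_propagates_up {n : ℕ}
    {L : Type} [LieRing L] [LieAlgebra ℂ L] [FiniteDimensional ℂ L]
    (hnd : (killingForm ℂ L).Nondegenerate)
    (V : ZMod n → Submodule ℂ L)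
    (hVinternal : DirectSum.IsInternal V)
    (hVbracket : ∀ i j : ZMod n, ∀ x ∈ V i, ∀ y ∈ V j, ⁅x, y⁆ ∈ V (i + j))
    (j : ZMod n) (h : L) (hh : h ∈ V j)
    (hss : Module.End.IsSemisimple (LieAlgebra.ad ℂ L h))
    (a : ZMod n) (ha : ∀ x ∈ V (-a), ⁅x, h⁆ = 0) :
    ∀ y ∈ V a, ⁅y, h⁆ = 0 := by
  intro y hy
  have hcomm : ∀ u ∈ V (-(a + j)), ⁅h, u⁆ = 0 := fun u hu ↦ by
    have hhu : ⁅h, u⁆ ∈ V (-a) := by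
      simpa only [neg_add_rev, add_neg_cancel_left] using hVbracket j _ h hh u hu
    refine hss.apply_eq_zero_of_apply_apply_eq_zero ?_
    rw [ad_apply, ad_apply, ← lie_skew, ha _ hhu, neg_zero]
  rw [← Submodule.mem_bot ℂ, ← hnd.ker_eq_bot]
  refine mem_ker_killingForm_of_mem_grading_of_forall_mem_neg hVinternal hVbracket
    (hVbracket a j y hy h hh) fun u hu ↦ ?_
  rw [LieModule.traceForm_apply_lie_apply, hcomm u hu, map_zero]
end
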